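/- arXiv:2007.14286 — 5 statements merged into one kernel-verified Lean document; each statement's English description precedes it below -/
import Mathlib

section
/- Let f : ℝ^k → ℝ^k be Lipschitz with constant L and satisfy ⟨f(x+v) − f(x), v⟩ ≥ δ|v|² for all x, v ∈ ℝ^k, with δ > 0. Write points of ℝ^k = ℝ^{k-1} × ℝ as (x, s). Then the function g : ℝ^{k-1} → ℝ assigning to each x the unique root s of f_k(x, s) = 0 (where f_k is the last component) is Lipschitz with constant L/δ. -/
/-!
Let `a = (y, g y)`, `b = (y, g x)`, `c = (x, g x)` and `t = g x - g y`, so that `b - a = t e`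
for the last basis vector `e`. Since `f_last a = 0`, coercivity along `b - a` gives
`δ t² ≤ t · f_last b = t · (f b - f c)_last ≤ |t| L ‖b - c‖ = |t| L ‖x - y‖`, hence
`δ |t| ≤ L ‖x - y‖`.
-/

open scoped RealInnerProductSpace

lemma mul_abs_le_of_mul_sq_le {δ M t : ℝ} (hM : 0 ≤ M) (h : δ * t ^ 2 ≤ |t| * M) :
    δ * |t| ≤ M := by
  rcases (abs_nonneg t).eq_or_lt with ht | ht
  · rw [← ht, mul_zero]
    exact hM
  · rw [← sq_abs, sq, ← mul_assoc, mul_comm |t| M] at h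
    exact le_of_mul_le_mul_right h ht

lemma nonneg_of_lipschitz_bound {α β : Type*} [MetricSpace α] [Nontrivial α]
    [PseudoMetricSpace β] {f : α → β} {L : ℝ}
    (hf : ∀ x y, dist (f x) (f y) ≤ L * dist x y) : 0 ≤ L := by
  obtain ⟨x, y, hxy⟩ := exists_pair_ne α
  exact nonneg_of_mul_nonneg_left (dist_nonneg.trans (hf x y)) (dist_pos.mpr hxy)

lemma mul_abs_le_dist_add_smul_of_inner_eq_zero {E : Type*} [NormedAddCommGroup E]
    [InnerProductSpace ℝ E] {f : E → E} {L δ : ℝ}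
    (hf : ∀ x y : E, dist (f x) (f y) ≤ L * dist x y)
    (hcoer : ∀ x v : E, δ * ‖v‖ ^ 2 ≤ ⟪f (x + v) - f x, v⟫)
    {u : E} (hu : ‖u‖ = 1) {a c : E} (ha : ⟪f a, u⟫ = 0) (hc : ⟪f c, u⟫ = 0) (t : ℝ) :
    δ * |t| ≤ L * dist (a + t • u) c := by
  have : Nontrivial E := ⟨⟨u, 0, norm_ne_zero_iff.mp (hu ▸ one_ne_zero)⟩⟩
  set b := a + t • u
  have hcoer_b : δ * t ^ 2 ≤ t * ⟪f b - f c, u⟫ := by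
    have h := hcoer a (t • u)
    rwa [norm_smul, hu, mul_one, Real.norm_eq_abs, sq_abs, inner_smul_right, inner_sub_left, ha,
      sub_zero, ← sub_zero ⟪f b, u⟫, ← hc, ← inner_sub_left] at h
  have hcomp : |⟪f b - f c, u⟫| ≤ L * dist b c := by
    calc |⟪f b - f c, u⟫| ≤ ‖f b - f c‖ * ‖u‖ := abs_real_inner_le_norm _ _
      _ = dist (f b) (f c) := by rw [hu, mul_one, dist_eq_norm]
      _ ≤ L * dist b c := hf b c
  refine mul_abs_le_of_mul_sq_le (mul_nonneg (nonneg_of_lipschitz_bound hf) dist_nonneg) ?_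
  calc δ * t ^ 2 ≤ t * ⟪f b - f c, u⟫ := hcoer_b
    _ ≤ |t * ⟪f b - f c, u⟫| := le_abs_self _
    _ = |t| * |⟪f b - f c, u⟫| := abs_mul _ _
    _ ≤ |t| * (L * dist b c) := mul_le_mul_of_nonneg_left hcomp (abs_nonneg t)

section Snoc

variable {k : ℕ}

lemma EuclideanSpace.inner_single_last_one (w : EuclideanSpace ℝ (Fin (k + 1))) :
    ⟪w, EuclideanSpace.single (Fin.last k) 1⟫ = w (Fin.last k) := by
  simp [EuclideanSpace.inner_single_right]

lemma EuclideanSpace.toLp_snoc_add_smul_single_last (x : EuclideanSpace ℝ (Fin k)) (s t : ℝ) :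
    (WithLp.toLp 2 (Fin.snoc x s : Fin (k + 1) → ℝ) : EuclideanSpace ℝ (Fin (k + 1))) +
        t • EuclideanSpace.single (Fin.last k) 1 =
      WithLp.toLp 2 (Fin.snoc x (s + t) : Fin (k + 1) → ℝ) := by
  ext i
  induction i using Fin.lastCases <;> simp

lemma EuclideanSpace.dist_toLp_snoc_toLp_snoc (x y : EuclideanSpace ℝ (Fin k)) (s : ℝ) :
    dist (WithLp.toLp 2 (Fin.snoc x s : Fin (k + 1) → ℝ) : EuclideanSpace ℝ (Fin (k + 1)))
        (WithLp.toLp 2 (Fin.snoc y s : Fin (k + 1) → ℝ)) = dist x y := by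
  simp [EuclideanSpace.dist_eq, Fin.sum_univ_castSucc]

end Snoc

/-- Let `f : ℝ^{k+1} → ℝ^{k+1}` be Lipschitz with constant `L` and coercive with
constant `δ > 0`, i.e. `⟪f (x + v) - f x, v⟫ ≥ δ ‖v‖²`.  Writing points of `ℝ^{k+1}` as pairs
`(x, s) ∈ ℝ^k × ℝ` (via `Fin.snoc`), the function `g : ℝ^k → ℝ` assigning to each `x` the (unique)
root `s` of `f_{k+1}(x, s) = 0` (where `f_{k+1}` is the last component of `f`) is Lipschitz with
constant `L / δ`. -/
theorem implicit_root_function_lipschitz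
    (k : ℕ) (f : EuclideanSpace ℝ (Fin (k + 1)) → EuclideanSpace ℝ (Fin (k + 1)))
    (L δ : ℝ) (hδ : 0 < δ)
    (hf : ∀ x y : EuclideanSpace ℝ (Fin (k + 1)), dist (f x) (f y) ≤ L * dist x y)
    (hcoer : ∀ x v : EuclideanSpace ℝ (Fin (k + 1)), δ * ‖v‖ ^ 2 ≤ ⟪f (x + v) - f x, v⟫)
    (g : EuclideanSpace ℝ (Fin k) → ℝ)
    (hg : ∀ x : EuclideanSpace ℝ (Fin k),
      f (WithLp.toLp 2 (Fin.snoc x (g x) : Fin (k + 1) → ℝ) : EuclideanSpace ℝ (Fin (k + 1))) (Fin.last k) = 0) :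
    ∀ x y : EuclideanSpace ℝ (Fin k), |g x - g y| ≤ (L / δ) * dist x y := by
  intro x y
  have hroot : ∀ z : EuclideanSpace ℝ (Fin k),
      ⟪f (WithLp.toLp 2 (Fin.snoc z (g z) : Fin (k + 1) → ℝ)),
        EuclideanSpace.single (Fin.last k) 1⟫ = 0 := fun z ↦ by
    rw [EuclideanSpace.inner_single_last_one, hg z]
  have key := mul_abs_le_dist_add_smul_of_inner_eq_zero hf hcoer (by simp) (hroot y) (hroot x)
    (g x - g y)
  rw [EuclideanSpace.toLp_snoc_add_smul_single_last, add_sub_cancel,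
    EuclideanSpace.dist_toLp_snoc_toLp_snoc, dist_comm] at key
  rwa [div_mul_eq_mul_div, le_div_iff₀ hδ, mul_comm]
end

section
/- A set S ⊆ ℝ^n = ℝ^{n-1} × ℝ is contained in the graph of some Lipschitz function φ : ℝ^{n-1} → ℝ if and only if there exist δ > 0 and a Lipschitz function f : ℝ^n → ℝ such that S ⊆ {x : f(x) = 0} and f(x + t e_n) − f(x) ≥ δ t for all x ∈ ℝ^n and t ≥ 0. -/
/-! Identify `ℝⁿ⁺¹` with `ℝⁿ × ℝ`. The graph of a Lipschitz `φ` is the zero set of the height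
`f (w, t) = t - φ w`, which grows at rate `1` in `t`. Conversely, on each vertical line
`t ↦ f (w, t)` is continuous and grows at least at rate `δ`, so it has exactly one zero `φ w`;
comparing the lines through `w` and `w'` at height `φ w` gives `δ |φ w - φ w'| ≤ K ‖w - w'‖`. -/

open Filter Function

section SliceMonotone

variable {h : ℝ → ℝ} {δ : ℝ}

lemma strictMono_of_mul_sub_le (hδ : 0 < δ) (hh : ∀ a b, a ≤ b → δ * (b - a) ≤ h b - h a) :
    StrictMono h := fun a b hab => by
  nlinarith [hh a b hab.le]

lemma tendsto_atTop_of_mul_sub_le (hδ : 0 < δ) (hh : ∀ a b, a ≤ b → δ * (b - a) ≤ h b - h a) :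
    Tendsto h atTop atTop := by
  refine tendsto_atTop_mono' _ ?_ (tendsto_atTop_add_const_left _ (h 0)
    (tendsto_id.const_mul_atTop hδ))
  filter_upwards [eventually_ge_atTop 0] with t ht
  have := hh 0 t ht
  simp only [id]
  linarith

lemma tendsto_atBot_of_mul_sub_le (hδ : 0 < δ) (hh : ∀ a b, a ≤ b → δ * (b - a) ≤ h b - h a) :
    Tendsto h atBot atBot := by
  refine tendsto_atBot_mono' _ ?_ (tendsto_atBot_add_const_left _ (h 0)
    (tendsto_id.const_mul_atBot hδ))
  filter_upwards [eventually_le_atBot 0] with t ht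
  have := hh t 0 ht
  simp only [id]
  linarith

lemma bijective_of_mul_sub_le (hc : Continuous h) (hδ : 0 < δ)
    (hh : ∀ a b, a ≤ b → δ * (b - a) ≤ h b - h a) : Bijective h :=
  ⟨(strictMono_of_mul_sub_le hδ hh).injective,
    hc.surjective (tendsto_atTop_of_mul_sub_le hδ hh) (tendsto_atBot_of_mul_sub_le hδ hh)⟩

end SliceMonotone

theorem exists_lipschitzWith_zero_iff_eq {E : Type*} [PseudoMetricSpace E] {g : E × ℝ → ℝ}
    {K : NNReal} {δ : ℝ} (hg : LipschitzWith K g) (hδ : 0 < δ)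
    (hmono : ∀ w a b, a ≤ b → δ * (b - a) ≤ g (w, b) - g (w, a)) :
    ∃ φ : E → ℝ, LipschitzWith (Real.toNNReal (K / δ)) φ ∧ ∀ w t, g (w, t) = 0 ↔ t = φ w := by
  have hbij (w : E) : Bijective fun t => g (w, t) :=
    bijective_of_mul_sub_le (hg.continuous.comp (Continuous.prodMk_right w)) hδ (hmono w)
  choose φ hφ using fun w => (hbij w).surjective 0
  simp only at hφ
  refine ⟨φ, LipschitzWith.of_le_add_mul' _ fun w w' => ?_, fun w t =>
    ⟨fun ht => (hbij w).injective (ht.trans (hφ w).symm), fun ht => ht ▸ hφ w⟩⟩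
  rcases le_total (φ w) (φ w') with hle | hle
  · have : 0 ≤ K / δ * dist w w' := by positivity
    linarith
  · have hslope : δ * (φ w - φ w') ≤ K * dist w w' :=
      calc δ * (φ w - φ w') ≤ g (w', φ w) - g (w', φ w') := hmono w' _ _ hle
        _ = g (w', φ w) - g (w, φ w) := by rw [hφ, hφ]
        _ ≤ K * dist w w' := by
          simpa [dist_prod_same_right, Real.dist_eq, dist_comm] using
            (le_abs_self _).trans (hg.dist_le_mul (w', φ w) (w, φ w))
    rw [div_mul_eq_mul_div]
    linarith [(le_div_iff₀' hδ).2 hslope]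

noncomputable def EuclideanSpace.snocCLE (n : ℕ) :
    (EuclideanSpace ℝ (Fin n) × ℝ) ≃L[ℝ] EuclideanSpace ℝ (Fin (n + 1)) :=
  LinearEquiv.toContinuousLinearEquiv
    { toFun := fun p => WithLp.toLp 2 (Fin.snoc p.1 p.2 : Fin (n + 1) → ℝ)
      invFun := fun x => (WithLp.toLp 2 (Fin.init x), x (Fin.last n))
      map_add' := fun p q => by ext i; refine Fin.lastCases ?_ (fun j => ?_) i <;> simp
      map_smul' := fun c p => by ext i; refine Fin.lastCases ?_ (fun j => ?_) i <;> simp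
      left_inv := fun p => by simp
      right_inv := fun x => by simp }

lemma EuclideanSpace.snocCLE_apply {n : ℕ} (w : EuclideanSpace ℝ (Fin n)) (t : ℝ) :
    snocCLE n (w, t) = WithLp.toLp 2 (Fin.snoc w t : Fin (n + 1) → ℝ) :=
  rfl

lemma EuclideanSpace.snocCLE_zero_prod {n : ℕ} (t : ℝ) :
    snocCLE n (0, t) = t • EuclideanSpace.single (Fin.last n) (1 : ℝ) := by
  ext i
  induction i using Fin.lastCases with
  | last => simp [snocCLE_apply]
  | cast j => simp [snocCLE_apply, (Fin.castSucc_lt_last j).ne]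

lemma EuclideanSpace.snocCLE_add_smul_single {n : ℕ} (p : EuclideanSpace ℝ (Fin n) × ℝ) (t : ℝ) :
    snocCLE n p + t • EuclideanSpace.single (Fin.last n) (1 : ℝ) = snocCLE n (p + (0, t)) := by
  rw [map_add, snocCLE_zero_prod]

open EuclideanSpace in
/-- A set `S ⊆ ℝ^{n+1} = ℝ^n × ℝ` is contained in the graph of some Lipschitz
function `φ : ℝ^n → ℝ` if and only if there exist `δ > 0` and a Lipschitz function
`f : ℝ^{n+1} → ℝ` such that `S ⊆ {f = 0}` and `f(x + t eₙ) - f(x) ≥ δ t` for all `x` and `t ≥ 0`,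
where `eₙ` is the last standard basis vector. -/
theorem subset_lipschitz_graph_iff_level_set
    (n : ℕ) (S : Set (EuclideanSpace ℝ (Fin (n + 1)))) :
    (∃ φ : EuclideanSpace ℝ (Fin n) → ℝ, (∃ K : NNReal, LipschitzWith K φ) ∧
      S ⊆ {p : EuclideanSpace ℝ (Fin (n + 1)) |
        ∃ w : EuclideanSpace ℝ (Fin n),
          p = (WithLp.toLp 2 (Fin.snoc w (φ w) : Fin (n + 1) → ℝ) : EuclideanSpace ℝ (Fin (n + 1)))}) ↔
    (∃ δ : ℝ, 0 < δ ∧ ∃ f : EuclideanSpace ℝ (Fin (n + 1)) → ℝ,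
      (∃ K : NNReal, LipschitzWith K f) ∧
      S ⊆ {x : EuclideanSpace ℝ (Fin (n + 1)) | f x = 0} ∧
      ∀ x : EuclideanSpace ℝ (Fin (n + 1)), ∀ t : ℝ, 0 ≤ t →
        δ * t ≤ f (x + t • EuclideanSpace.single (Fin.last n) (1 : ℝ)) - f x) := by
  constructor
  · rintro ⟨φ, ⟨K, hφ⟩, hS⟩
    refine ⟨1, one_pos, fun x => ((snocCLE n).symm x).2 - φ ((snocCLE n).symm x).1,
      ⟨_, (LipschitzWith.prod_snd.sub (hφ.comp LipschitzWith.prod_fst)).comp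
        (snocCLE n).symm.lipschitz⟩, fun p hp => ?_, fun x t _ => ?_⟩
    · obtain ⟨w, rfl⟩ := hS hp
      simp [← snocCLE_apply]
    · rw [← (snocCLE n).apply_symm_apply x, snocCLE_add_smul_single]
      simp only [ContinuousLinearEquiv.symm_apply_apply, Prod.fst_add, Prod.snd_add, add_zero]
      linarith
  · rintro ⟨δ, hδ, f, ⟨K, hf⟩, hS, hmono⟩
    obtain ⟨φ, hφ, hzero⟩ := exists_lipschitzWith_zero_iff_eq (hf.comp (snocCLE n).lipschitz) hδ
      fun w a b hab => by
        have := hmono (snocCLE n (w, a)) (b - a) (sub_nonneg.2 hab)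
        rwa [snocCLE_add_smul_single, Prod.mk_add_mk, add_zero, add_sub_cancel] at this
    refine ⟨φ, ⟨_, hφ⟩, fun p hp => ⟨((snocCLE n).symm p).1, ?_⟩⟩
    have hlast : ((snocCLE n).symm p).2 = φ ((snocCLE n).symm p).1 :=
      (hzero _ _).1 (by simpa using hS hp)
    rw [← snocCLE_apply, ← hlast, Prod.mk.eta, ContinuousLinearEquiv.apply_symm_apply]
end

section
/- Let V be a real vector space of dimension ℓ, and let 𝒫₁, 𝒫₂ be m-dimensional subspaces of V with 1 ≤ m ≤ ℓ. Assume there exist nonzero simple m-vectors t₁, t₂ ∈ Λ_m V with Span(t₁) = 𝒫₁ and Span(t₂) = 𝒫₂ such that t₁ − t₂ is a simple m-vector. Then dim(𝒫₁ ∩ 𝒫₂) ≥ m − 1. -/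
/-!
If `v ∧ t₁ = v ∧ t₂ ≠ 0` for some vector `v`, this common value is a nonzero simple
`(m + 1)`-vector annihilated by `𝒫₁ + 𝒫₂`, so `dim (𝒫₁ + 𝒫₂) ≤ m + 1`, i.e.
`dim (𝒫₁ ∩ 𝒫₂) ≥ m - 1`. Otherwise every `v` with `v ∧ (t₁ - t₂) = 0` lies in `𝒫₁ ∩ 𝒫₂`, and for
`t₁ ≠ t₂` these `v` form the `m`-dimensional space `Span (t₁ - t₂)`.
-/

open Module

namespace ExteriorAlgebra

variable {K E : Type*} [Field K] [AddCommGroup E] [Module K E]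

/-- The paper's `Span t`. -/
def wedgeAnnihilator (t : ExteriorAlgebra K E) : Submodule K E :=
  LinearMap.ker (LinearMap.mulRight K t ∘ₗ ι K)

@[simp]
lemma mem_wedgeAnnihilator {t : ExteriorAlgebra K E} {v : E} :
    v ∈ wedgeAnnihilator t ↔ ι K v * t = 0 :=
  Iff.rfl

lemma ι_mul_ιMulti {n : ℕ} (w : E) (v : Fin n → E) :
    ι K w * ιMulti K n v = ιMulti K (n + 1) (Fin.cons w v) := by
  rw [ιMulti_succ_apply]
  rfl

lemma ιMulti_ne_zero_iff_linearIndependent {n : ℕ} {v : Fin n → E} :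
    ιMulti K n v ≠ 0 ↔ LinearIndependent K v := by
  refine ⟨fun h => not_not.1 fun hv => h ((ιMulti K n).map_linearDependent v hv), fun hv => ?_⟩
  have := (exteriorPower.ιMulti_family_linearIndependent_field (n := n) hv).ne_zero
    (Set.powersetCard.ofFinEmbEquiv (OrderIso.refl (Fin n)).toOrderEmbedding)
  rwa [exteriorPower.ιMulti_family, Equiv.symm_apply_apply, ne_eq, ← Submodule.coe_eq_zero,
    exteriorPower.ιMulti_apply_coe] at this

lemma wedgeAnnihilator_ιMulti {n : ℕ} {v : Fin n → E} (hv : LinearIndependent K v) :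
    wedgeAnnihilator (ιMulti K n v) = Submodule.span K (Set.range v) := by
  refine le_antisymm (fun w hw => not_not.1 fun hwv => ?_) (Submodule.span_le.2 ?_)
  · refine ιMulti_ne_zero_iff_linearIndependent.2 (linearIndependent_finCons.2 ⟨hv, hwv⟩) ?_
    rwa [← ι_mul_ιMulti]
  · rintro _ ⟨i, rfl⟩
    exact ι_mul_prod_list v i

lemma finrank_wedgeAnnihilator_ιMulti {n : ℕ} {v : Fin n → E} (hv : LinearIndependent K v) :
    finrank K (wedgeAnnihilator (ιMulti K n v)) = n := by
  rw [wedgeAnnihilator_ιMulti hv, finrank_span_eq_card hv, Fintype.card_fin]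

lemma wedgeAnnihilator_le_ι_mul (w : E) (t : ExteriorAlgebra K E) :
    wedgeAnnihilator t ≤ wedgeAnnihilator (ι K w * t) := fun u hu => by
  rw [mem_wedgeAnnihilator, ← mul_assoc, ← neg_eq_of_add_eq_zero_right (ι_add_mul_swap w u),
    neg_mul, mul_assoc, mem_wedgeAnnihilator.1 hu, mul_zero, neg_zero]

lemma mem_inf_or_finrank_sup_le {n : ℕ} {t₁ t₂ : ExteriorAlgebra K E} {a : Fin n → E}
    (ha : t₁ = ιMulti K n a) {w : E} (hw : ι K w * t₁ = ι K w * t₂) :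
    w ∈ wedgeAnnihilator t₁ ⊓ wedgeAnnihilator t₂ ∨
      finrank K ↥(wedgeAnnihilator t₁ ⊔ wedgeAnnihilator t₂) ≤ n + 1 := by
  subst ha
  by_cases hw₀ : ι K w * ιMulti K n a = 0
  · exact .inl ⟨hw₀, hw.symm.trans hw₀⟩
  have hsup : wedgeAnnihilator (ιMulti K n a) ⊔ wedgeAnnihilator t₂ ≤
      wedgeAnnihilator (ι K w * ιMulti K n a) :=
    sup_le (wedgeAnnihilator_le_ι_mul w _) (hw ▸ wedgeAnnihilator_le_ι_mul w t₂)
  rw [ι_mul_ιMulti] at hw₀ hsup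
  have hli := ιMulti_ne_zero_iff_linearIndependent.1 hw₀
  have : FiniteDimensional K (wedgeAnnihilator (ιMulti K (n + 1) (Fin.cons w a))) := by
    rw [wedgeAnnihilator_ιMulti hli]
    exact FiniteDimensional.span_of_finite K (Set.finite_range _)
  exact .inr ((Submodule.finrank_mono hsup).trans (finrank_wedgeAnnihilator_ιMulti hli).le)

end ExteriorAlgebra

theorem rank_one_connected_of_simple_difference_general
    (V : Type*) [AddCommGroup V] [Module ℝ V] [FiniteDimensional ℝ V]
    (m : ℕ)
    (P₁ P₂ : Submodule ℝ V) (hP₁ : finrank ℝ P₁ = m) (hP₂ : finrank ℝ P₂ = m)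
    (t₁ t₂ : ExteriorAlgebra ℝ V)
    (ht₁ : ∃ v : Fin m → V, t₁ = ExteriorAlgebra.ιMulti ℝ m v)
    (hspan₁ : ∀ v : V, v ∈ P₁ ↔ ExteriorAlgebra.ι ℝ v * t₁ = 0)
    (hspan₂ : ∀ v : V, v ∈ P₂ ↔ ExteriorAlgebra.ι ℝ v * t₂ = 0)
    (hdiff : ∃ v : Fin m → V, t₁ - t₂ = ExteriorAlgebra.ιMulti ℝ m v) :
    m - 1 ≤ finrank ℝ ↥(P₁ ⊓ P₂) := by
  have hP₁t : P₁ = ExteriorAlgebra.wedgeAnnihilator t₁ := Submodule.ext hspan₁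
  have hP₂t : P₂ = ExteriorAlgebra.wedgeAnnihilator t₂ := Submodule.ext hspan₂
  obtain ⟨a, ha⟩ := ht₁
  obtain ⟨c, hc⟩ := hdiff
  have hdim := Submodule.finrank_sup_add_finrank_inf_eq P₁ P₂
  by_cases hsup : finrank ℝ ↥(P₁ ⊔ P₂) ≤ m + 1
  · omega
  have hle : ExteriorAlgebra.wedgeAnnihilator (t₁ - t₂) ≤ P₁ ⊓ P₂ := fun w hw => by
    rw [hP₁t, hP₂t] at hsup ⊢
    refine (ExteriorAlgebra.mem_inf_or_finrank_sup_le ha ?_).resolve_right hsup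
    rwa [← sub_eq_zero, ← mul_sub]
  by_cases heq : t₁ = t₂
  · rw [show P₁ = P₂ by rw [hP₁t, hP₂t, heq], inf_idem]
    omega
  have hc_li := ExteriorAlgebra.ιMulti_ne_zero_iff_linearIndependent.1 (hc ▸ sub_ne_zero.2 heq)
  have hm := Submodule.finrank_mono (hc ▸ hle)
  rw [ExteriorAlgebra.finrank_wedgeAnnihilator_ιMulti hc_li] at hm
  omega

/-- Let `V` be a real vector space of dimension `ℓ` and let `𝒫₁, 𝒫₂` be
`m`-dimensional subspaces of `V` (`1 ≤ m ≤ ℓ`).  Suppose there are nonzero simple `m`-vectors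
`t₁, t₂ ∈ Λ_m V` with `Span tᵢ = 𝒫ᵢ` (where `Span t = {v : v ∧ t = 0}`) such that `t₁ - t₂` is
simple.  Then `dim (𝒫₁ ∩ 𝒫₂) ≥ m - 1`. -/
theorem rank_one_connected_of_simple_difference
    (V : Type*) [AddCommGroup V] [Module ℝ V] [FiniteDimensional ℝ V]
    (ℓ m : ℕ) (hV : finrank ℝ V = ℓ) (hm : 1 ≤ m) (hmℓ : m ≤ ℓ)
    (P₁ P₂ : Submodule ℝ V) (hP₁ : finrank ℝ P₁ = m) (hP₂ : finrank ℝ P₂ = m)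
    (t₁ t₂ : ExteriorAlgebra ℝ V)
    (ht₁ : ∃ v : Fin m → V, t₁ = ExteriorAlgebra.ιMulti ℝ m v) (ht₁0 : t₁ ≠ 0)
    (ht₂ : ∃ v : Fin m → V, t₂ = ExteriorAlgebra.ιMulti ℝ m v) (ht₂0 : t₂ ≠ 0)
    (hspan₁ : ∀ v : V, v ∈ P₁ ↔ ExteriorAlgebra.ι ℝ v * t₁ = 0)
    (hspan₂ : ∀ v : V, v ∈ P₂ ↔ ExteriorAlgebra.ι ℝ v * t₂ = 0)
    (hdiff : ∃ v : Fin m → V, t₁ - t₂ = ExteriorAlgebra.ιMulti ℝ m v) :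
    m - 1 ≤ finrank ℝ ↥(P₁ ⊓ P₂) :=
  rank_one_connected_of_simple_difference_general V m P₁ P₂ hP₁ hP₂ t₁ t₂ ht₁ hspan₁ hspan₂ hdiff
end

section
/- Let V be a real vector space, m ≥ 1, and let 𝒫₁, 𝒫₂ be m-dimensional subspaces of V with dim(𝒫₁ ∩ 𝒫₂) ≥ m − 1. Then for every pair of nonzero simple m-vectors t₁, t₂ ∈ Λ_m V tangent to 𝒫₁, 𝒫₂ respectively, the difference t₁ − t₂ is a simple m-vector. -/
open Module

private lemma alt_eq_det_smul {M N : Type*} [AddCommGroup M] [Module ℝ M]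
    [AddCommGroup N] [Module ℝ N] {n : ℕ} (e : Basis (Fin n) ℝ M)
    (f : M [⋀^Fin n]→ₗ[ℝ] N) (x : Fin n → M) : f x = e.det x • f ⇑e := by
  have h : f = (LinearMap.toSpanSingleton ℝ N (f ⇑e)).compAlternatingMap e.det := by
    refine Basis.ext_alternating e fun i hi => ?_
    have hbij : Function.Bijective i := Finite.injective_iff_bijective.1 hi
    set σ : Equiv.Perm (Fin n) := Equiv.ofBijective i hbij with hσ
    have hie : (fun j => e (i j)) = ⇑e ∘ σ := rfl
    rw [hie, AlternatingMap.map_perm, LinearMap.compAlternatingMap_apply,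
      AlternatingMap.map_perm, Basis.det_self]
    rcases Int.units_eq_one_or (Equiv.Perm.sign σ) with h1 | h1 <;>
      simp [h1, LinearMap.toSpanSingleton_apply]
  conv_lhs => rw [h]
  simp [LinearMap.toSpanSingleton_apply]

private lemma iMulti_proportional {V : Type*} [AddCommGroup V] [Module ℝ V]
    {n : ℕ} {P : Submodule ℝ V} {u x : Fin n → V}
    (hu : LinearIndependent ℝ u) (huP : Submodule.span ℝ (Set.range u) = P)
    (hx : LinearIndependent ℝ x) (hxP : Submodule.span ℝ (Set.range x) = P) :
    ∃ c : ℝ, ExteriorAlgebra.ιMulti ℝ n x = c • ExteriorAlgebra.ιMulti ℝ n u := by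
  have humem : ∀ i, u i ∈ P := fun i => huP ▸ Submodule.subset_span ⟨i, rfl⟩
  have hxmem : ∀ i, x i ∈ P := fun i => hxP ▸ Submodule.subset_span ⟨i, rfl⟩
  set u' : Fin n → P := fun i => ⟨u i, humem i⟩ with hu'def
  set x' : Fin n → P := fun i => ⟨x i, hxmem i⟩ with hx'def
  have hucomp : u = ⇑P.subtype ∘ u' := rfl
  have hu' : LinearIndependent ℝ u' := (hucomp ▸ hu).of_comp P.subtype
  have hsp : Submodule.span ℝ (Set.range u') = ⊤ := by
    apply Submodule.map_injective_of_injective P.injective_subtype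
    rw [Submodule.map_span, ← Set.range_comp, Submodule.map_top, Submodule.range_subtype,
      ← hucomp]
    exact huP
  set b : Basis (Fin n) ℝ P := Basis.mk hu' hsp.ge with hbdef
  set f : P [⋀^Fin n]→ₗ[ℝ] ExteriorAlgebra ℝ V :=
    (ExteriorAlgebra.ιMulti ℝ n).compLinearMap P.subtype with hfdef
  have hfb : f ⇑b = ExteriorAlgebra.ιMulti ℝ n u := by
    rw [hfdef, AlternatingMap.compLinearMap_apply]
    congr 1
    funext i
    simp [hbdef, Basis.mk_apply, hu'def]
  have hfx : f x' = ExteriorAlgebra.ιMulti ℝ n x := by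
    rw [hfdef, AlternatingMap.compLinearMap_apply]
    exact congrArg _ (funext fun i => rfl)
  refine ⟨b.det x', ?_⟩
  rw [← hfx, ← hfb]
  exact alt_eq_det_smul b f x'

private lemma extend_to_basis {V : Type*} [AddCommGroup V] [Module ℝ V]
    {n : ℕ} {P : Submodule ℝ V} (hP : finrank ℝ P = n + 1) (e : Fin n → V)
    (he : LinearIndependent ℝ e) (heP : Set.range e ⊆ P) :
    ∃ a : V, LinearIndependent ℝ (Fin.cons a e) ∧
      Submodule.span ℝ (Set.range (Fin.cons a e)) = P := by
  haveI : FiniteDimensional ℝ P := FiniteDimensional.of_finrank_eq_succ hP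
  set W := Submodule.span ℝ (Set.range e) with hWdef
  have hWP : W ≤ P := Submodule.span_le.2 heP
  have hW : finrank ℝ W = n := by
    rw [hWdef, finrank_span_eq_card he, Fintype.card_fin]
  have hne : W ≠ P := fun h => by rw [h, hP] at hW; omega
  obtain ⟨a, haP, haW⟩ := SetLike.exists_of_lt (lt_of_le_of_ne hWP hne)
  have hli : LinearIndependent ℝ (Fin.cons a e) := linearIndependent_fin_cons.2 ⟨he, haW⟩
  refine ⟨a, hli, ?_⟩
  apply Submodule.eq_of_le_of_finrank_le
  · rw [Submodule.span_le, Fin.range_cons]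
    exact Set.insert_subset haP heP
  · rw [hP, finrank_span_eq_card hli, Fintype.card_fin]

/-- Let `V` be a real vector space, `m ≥ 1`, and let `𝒫₁, 𝒫₂` be
`m`-dimensional subspaces with `dim (𝒫₁ ⊓ 𝒫₂) ≥ m - 1`.  Then for every pair of nonzero simple
`m`-vectors `t₁ = v₁ ∧ ⋯ ∧ v_m` and `t₂ = w₁ ∧ ⋯ ∧ w_m` tangent to `𝒫₁`, `𝒫₂` respectively
(i.e. obtained by wedging bases of `𝒫₁`, `𝒫₂`), the difference `t₁ - t₂` is a simple `m`-vector. -/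
theorem simple_difference_of_rank_one_connected
    (V : Type*) [AddCommGroup V] [Module ℝ V]
    (m : ℕ) (hm : 1 ≤ m)
    (P₁ P₂ : Submodule ℝ V) (hP₁ : finrank ℝ P₁ = m) (hP₂ : finrank ℝ P₂ = m)
    (hinter : m - 1 ≤ finrank ℝ ↥(P₁ ⊓ P₂))
    (v w : Fin m → V)
    (hv : LinearIndependent ℝ v) (hw : LinearIndependent ℝ w)
    (hvP : Submodule.span ℝ (Set.range v) = P₁)
    (hwP : Submodule.span ℝ (Set.range w) = P₂) :
    ∃ u : Fin m → V,
      ExteriorAlgebra.ιMulti ℝ m v - ExteriorAlgebra.ιMulti ℝ m w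
        = ExteriorAlgebra.ιMulti ℝ m u := by
  obtain ⟨n, rfl⟩ : ∃ n, m = n + 1 := ⟨m - 1, by omega⟩
  haveI : FiniteDimensional ℝ P₁ := FiniteDimensional.of_finrank_eq_succ hP₁
  haveI : FiniteDimensional ℝ ↥(P₁ ⊓ P₂) :=
    Submodule.finiteDimensional_of_le inf_le_left
  have hn : n ≤ finrank ℝ ↥(P₁ ⊓ P₂) := by simpa using hinter
  set c : Basis (Fin (finrank ℝ ↥(P₁ ⊓ P₂))) ℝ ↥(P₁ ⊓ P₂) := finBasis ℝ ↥(P₁ ⊓ P₂)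
  set e : Fin n → V := fun i => ((c (Fin.castLE hn i) : ↥(P₁ ⊓ P₂)) : V) with hedef
  have he : LinearIndependent ℝ e := by
    have h1 := c.linearIndependent.comp (Fin.castLE hn) (Fin.castLE_injective hn)
    exact h1.map' (P₁ ⊓ P₂).subtype (Submodule.ker_subtype _)
  have he1 : Set.range e ⊆ P₁ := by
    rintro y ⟨i, rfl⟩
    exact ((c (Fin.castLE hn i)).2 : _ ∈ P₁ ⊓ P₂).1
  have he2 : Set.range e ⊆ P₂ := by
    rintro y ⟨i, rfl⟩
    exact ((c (Fin.castLE hn i)).2 : _ ∈ P₁ ⊓ P₂).2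
  obtain ⟨a, ha, haP⟩ := extend_to_basis hP₁ e he he1
  obtain ⟨b, hb, hbP⟩ := extend_to_basis hP₂ e he he2
  obtain ⟨c₁, hc₁⟩ := iMulti_proportional ha haP hv hvP
  obtain ⟨c₂, hc₂⟩ := iMulti_proportional hb hbP hw hwP
  refine ⟨Fin.cons (c₁ • a - c₂ • b) e, ?_⟩
  have key : ∀ (z : V) (cz : ℝ),
      cz • ExteriorAlgebra.ιMulti ℝ (n + 1) (Fin.cons z e)
        = ExteriorAlgebra.ιMulti ℝ (n + 1) (Fin.cons (cz • z) e) := by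
    intro z cz
    have h1 := AlternatingMap.map_update_smul (ExteriorAlgebra.ιMulti ℝ (n + 1))
      (Fin.cons z e) 0 cz z
    rw [Fin.update_cons_zero, Fin.update_cons_zero] at h1
    exact h1.symm
  have hsub := AlternatingMap.map_update_sub (ExteriorAlgebra.ιMulti ℝ (n + 1))
    (Fin.cons (c₁ • a) e) 0 (c₁ • a) (c₂ • b)
  rw [Fin.update_cons_zero, Fin.update_cons_zero, Fin.update_cons_zero] at hsub
  rw [hc₁, hc₂, key a c₁, key b c₂, ← hsub]
end

section
/- Let M be a finite subset of ℕ of cardinality m, arranged in a two-row Young tableau R with first row R¹_1, …, R¹_ℓ and second row R²_1, …, R²_{m−ℓ} (each element of M appearing exactly once, ℓ ≥ m/2). Define the 2ℓ-covector α_R := (dxy_{R¹_1} − dxy_{R²_1}) ∧ ⋯ ∧ (dxy_{R¹_{m−ℓ}} − dxy_{R²_{m−ℓ}}) ∧ dxy_{R¹_{m−ℓ+1}} ∧ ⋯ ∧ dxy_{R¹_ℓ} on ℝ^{2n}, where dxy_i := dx_i ∧ dy_i. Then α_R ∧ ∑_{i ∈ M} dx_i ∧ dy_i = 0. -/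
set_option synthInstance.maxHeartbeats 1000000
/-- The space of covectors: the dual of `ℝ^{2n} = ℝ^n_x × ℝ^n_y`. -/
abbrev CovectorSpace (n : ℕ) : Type _ :=
  Module.Dual ℝ ((Fin n → ℝ) × (Fin n → ℝ))

/-- The coordinate covector `dx_i` on `ℝ^{2n}`. -/
noncomputable def dxCov (n : ℕ) (i : Fin n) : CovectorSpace n :=
  (LinearMap.proj i).comp (LinearMap.fst ℝ (Fin n → ℝ) (Fin n → ℝ))

/-- The coordinate covector `dy_i` on `ℝ^{2n}`. -/
noncomputable def dyCov (n : ℕ) (i : Fin n) : CovectorSpace n :=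
  (LinearMap.proj i).comp (LinearMap.snd ℝ (Fin n → ℝ) (Fin n → ℝ))

/-- The 2-covector `dxy_i := dx_i ∧ dy_i`. -/
noncomputable def dxyCov (n : ℕ) (i : Fin n) : ExteriorAlgebra ℝ (CovectorSpace n) :=
  ExteriorAlgebra.ι ℝ (dxCov n i) * ExteriorAlgebra.ι ℝ (dyCov n i)

/-- The `2ℓ`-covector `α_R` associated with a two-row tableau with first row `R¹ : Fin ℓ` and
second row `R² : Fin (m - ℓ)`: the product of the differences `dxy_{R¹_j} - dxy_{R²_j}` for
`j < m - ℓ` followed by the factors `dxy_{R¹_j}` for `m - ℓ ≤ j < ℓ`. -/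
noncomputable def alphaCov (n m ℓ : ℕ) (R1 : Fin ℓ → Fin n) (R2 : Fin (m - ℓ) → Fin n) :
    ExteriorAlgebra ℝ (CovectorSpace n) :=
  (List.ofFn fun j : Fin ℓ =>
    if h : (j : ℕ) < m - ℓ then dxyCov n (R1 j) - dxyCov n (R2 ⟨(j : ℕ), h⟩)
    else dxyCov n (R1 j)).prod

/-! The 2-forms `dxy_i` commute and square to zero. Grouping `∑_{i ∈ M} dxy_i` by the columns of
the tableau, the column sum `dxy_{R¹_j} + dxy_{R²_j}` (or `dxy_{R¹_j}`) is killed by the `j`-th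
factor of `α_R`, because `(a - b) (a + b) = a² - b² = 0` for commuting square-zero `a, b`; since
all factors commute, `α_R` kills every column sum. -/

namespace ExteriorAlgebra

variable {R M : Type*} [CommRing R] [AddCommGroup M] [Module R M]

theorem ι_mul_ι_commute_ι (x y z : M) : Commute (ι R x * ι R y) (ι R z) := by
  have hswap (a b : M) : ι R a * ι R b = -(ι R b * ι R a) :=
    eq_neg_of_add_eq_zero_left (ι_add_mul_swap a b)
  rw [Commute, SemiconjBy, mul_assoc, hswap y z, mul_neg, ← mul_assoc, hswap x z, neg_mul,
    neg_neg, mul_assoc]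

theorem ι_mul_ι_commute_ι_mul_ι (x y z w : M) :
    Commute (ι R x * ι R y) (ι R z * ι R w) :=
  (ι_mul_ι_commute_ι x y z).mul_right (ι_mul_ι_commute_ι x y w)

theorem ι_mul_ι_mul_self (x y : M) : ι R x * ι R y * (ι R x * ι R y) = 0 := by
  rw [← mul_assoc, (ι_mul_ι_commute_ι x y x).eq, ← mul_assoc, ι_sq_zero, zero_mul, zero_mul]

end ExteriorAlgebra

section Ring

variable {A : Type*} [Ring A]

theorem List.prod_mul_eq_zero_of_mem {L : List A} {a f : A} (hf : f ∈ L) (hfa : f * a = 0)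
    (hL : ∀ x ∈ L, Commute a x) : L.prod * a = 0 := by
  obtain ⟨s, t, rfl⟩ := List.append_of_mem hf
  have ht : Commute a t.prod :=
    Commute.list_prod_right t a fun x hx => hL x (by simp [hx])
  rw [List.prod_append, List.prod_cons, mul_assoc, mul_assoc, ← ht.eq, ← mul_assoc f, hfa,
    zero_mul, mul_zero]

theorem Commute.sub_mul_add_eq_zero {a b : A} (h : Commute a b) (ha : a * a = 0)
    (hb : b * b = 0) : (a - b) * (a + b) = 0 := by
  rw [← mul_self_sub_mul_self_eq' h, ha, hb, sub_zero]

end Ring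

section Tableau

variable {ι : Type*} {ℓ k : ℕ} (R1 : Fin ℓ → ι) (R2 : Fin k → ι)

theorem Fin.sum_dite_lt_eq_sum {N : Type*} [AddCommMonoid N] (hk : k ≤ ℓ) (g : Fin k → N) :
    ∑ j : Fin ℓ, (if h : (j : ℕ) < k then g ⟨j, h⟩ else 0) = ∑ i, g i := by
  refine (Fintype.sum_of_injective (Fin.castLE hk) (Fin.castLE_injective hk) _ _ ?_ ?_).symm
  · intro j hj
    rw [dif_neg fun h => hj ⟨⟨j, h⟩, rfl⟩]
  · intro i
    simp [i.isLt]

theorem sum_eq_sum_tableau_columns {N : Type*} [AddCommMonoid N] (d : ι → N) (hk : k ≤ ℓ)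
    (hinj : Function.Injective (Sum.elim R1 R2)) {M : Finset ι}
    (hrange : Set.range R1 ∪ Set.range R2 = (M : Set ι)) :
    ∑ i ∈ M, d i = ∑ j : Fin ℓ, (d (R1 j) + if h : (j : ℕ) < k then d (R2 ⟨j, h⟩) else 0) := by
  have hM : M = Finset.univ.map ⟨Sum.elim R1 R2, hinj⟩ := by
    apply Finset.coe_injective
    simp [← hrange, Set.Sum.elim_range]
  rw [hM, Finset.sum_map, Finset.sum_add_distrib, Fin.sum_dite_lt_eq_sum hk fun i => d (R2 i)]
  exact Fintype.sum_sum_type _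

theorem tableau_prod_mul_sum_eq_zero {A : Type*} [Ring A] {d : ι → A}
    (hcomm : ∀ i j, Commute (d i) (d j)) (hsq : ∀ i, d i * d i = 0) (hk : k ≤ ℓ)
    (hinj : Function.Injective (Sum.elim R1 R2)) {M : Finset ι}
    (hrange : Set.range R1 ∪ Set.range R2 = (M : Set ι)) :
    (List.ofFn fun j : Fin ℓ =>
      if h : (j : ℕ) < k then d (R1 j) - d (R2 ⟨j, h⟩) else d (R1 j)).prod *
      ∑ i ∈ M, d i = 0 := by
  rw [sum_eq_sum_tableau_columns R1 R2 d hk hinj hrange, Finset.mul_sum]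
  refine Finset.sum_eq_zero fun j _ =>
    List.prod_mul_eq_zero_of_mem (List.mem_ofFn.mpr ⟨j, rfl⟩) ?_ ?_
  · by_cases h : (j : ℕ) < k
    · simp only [dif_pos h]
      exact (hcomm _ _).sub_mul_add_eq_zero (hsq _) (hsq _)
    · simp only [dif_neg h, add_zero]
      exact hsq _
  · intro x hx
    obtain ⟨i, rfl⟩ := List.mem_ofFn.mp hx
    split_ifs <;> apply_rules [Commute.add_left, Commute.sub_right, Commute.zero_left]

end Tableau

theorem alpha_wedge_sum_eq_zero_general
    (n m ℓ : ℕ) (hmℓ : m ≤ 2 * ℓ)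
    (M : Finset (Fin n))
    (R1 : Fin ℓ → Fin n) (R2 : Fin (m - ℓ) → Fin n)
    (hinj : Function.Injective (Sum.elim R1 R2))
    (hrange : Set.range R1 ∪ Set.range R2 = (M : Set (Fin n))) :
    alphaCov n m ℓ R1 R2 * ∑ i ∈ M, dxyCov n i = 0 :=
  tableau_prod_mul_sum_eq_zero R1 R2
    (fun _ _ => ExteriorAlgebra.ι_mul_ι_commute_ι_mul_ι _ _ _ _)
    (fun _ => ExteriorAlgebra.ι_mul_ι_mul_self _ _) (by omega) hinj hrange

/-- Let `M ⊆ {1, …, n}` have cardinality `m`, arranged in a two-row Young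
tableau `R = (R¹, R²)` with rows of lengths `ℓ ≥ m/2` and `m - ℓ`, each element of `M` appearing
exactly once.  Then `α_R ∧ ∑_{i ∈ M} dx_i ∧ dy_i = 0`. -/
theorem alpha_wedge_sum_eq_zero
    (n m ℓ : ℕ) (hℓm : ℓ ≤ m) (hmℓ : m ≤ 2 * ℓ)
    (M : Finset (Fin n)) (hM : M.card = m)
    (R1 : Fin ℓ → Fin n) (R2 : Fin (m - ℓ) → Fin n)
    (hinj : Function.Injective (Sum.elim R1 R2))
    (hrange : Set.range R1 ∪ Set.range R2 = (M : Set (Fin n))) :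
    alphaCov n m ℓ R1 R2 * ∑ i ∈ M, dxyCov n i = 0 :=
  alpha_wedge_sum_eq_zero_general n m ℓ hmℓ M R1 R2 hinj hrange
end
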